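/- arXiv:0708.1757 — 5 statements merged into one kernel-verified Lean document; each statement's English description precedes it below -/
import Mathlib

section
/- Let n ≥ 4 and let m_1, …, m_n be integers with m_i ≥ 2 for 1 ≤ i ≤ n−1 and m_n ≥ 1, satisfying the dominance inequalities for type C_n: m_2 ≤ 2m_1, m_{i−1} + m_{i+1} ≤ 2m_i for 2 ≤ i ≤ n−2, m_{n−2} + 2m_n ≤ 2m_{n−1}, and m_{n−1} ≤ 2m_n. If m_i = 2 for some i with 2 ≤ i ≤ n−1, then m_i = 2 for all i with 1 ≤ i ≤ n−1 and m_n = 1. -/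
/-!
Replacing `m n` by `2 * m n` turns the dominance inequalities into midpoint concavity of
`m 1, …, m (n - 1), 2 * m n` at every interior index, and `ζ ≻ μ₂` says that this sequence is
bounded below by `2`. A concave sequence that attains its lower bound at an interior index
is constant: there its two neighbours average to at most the bound, so both equal it, and the
equality spreads outwards step by step.
-/

section ConcaveSequence

variable {α : Type*} [CommRing α] [LinearOrder α] [IsStrictOrderedRing α]
  {f : ℕ → α} {a b : ℕ} {c : α}

theorem neighbours_eq_of_concave_of_eq_lowerBound
    (hlow : ∀ j, a ≤ j → j ≤ b → c ≤ f j)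
    (hconc : ∀ j, a < j → j < b → f (j - 1) + f (j + 1) ≤ 2 * f j)
    {j : ℕ} (haj : a < j) (hjb : j < b) (hj : f j = c) :
    f (j - 1) = c ∧ f (j + 1) = c := by
  have hprev := hlow (j - 1) (by omega) (by omega)
  have hnext := hlow (j + 1) (by omega) (by omega)
  have := hconc j haj hjb
  constructor <;> linarith

theorem eq_lowerBound_of_concave_of_eq_lowerBound
    (hlow : ∀ j, a ≤ j → j ≤ b → c ≤ f j)
    (hconc : ∀ j, a < j → j < b → f (j - 1) + f (j + 1) ≤ 2 * f j)
    {i : ℕ} (hai : a < i) (hib : i < b) (hi : f i = c) :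
    ∀ j, a ≤ j → j ≤ b → f j = c := by
  have step : ∀ {j}, a < j → j < b → f j = c → f (j - 1) = c ∧ f (j + 1) = c :=
    neighbours_eq_of_concave_of_eq_lowerBound hlow hconc
  have above : ∀ j, i ≤ j → j ≤ b → f j = c := by
    refine Nat.le_induction (fun _ => hi) fun j hij ih hjb => ?_
    exact (step (by omega) (by omega) (ih (by omega))).2
  have below : ∀ j, j ≤ i → a ≤ j → f j = c := by
    intro j hji
    induction hji using Nat.decreasingInduction with
    | self => exact fun _ => hi
    | of_succ k hki ih =>
      intro hak
      simpa using (step (by omega) (by omega) (ih (by omega))).1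
  intro j haj hjb
  rcases le_total i j with hij | hji
  · exact above j hij hjb
  · exact below j hji haj

end ConcaveSequence

theorem stmt_9_general (n : ℕ) (m : ℕ → ℤ)
    (hge : ∀ i, 1 ≤ i → i ≤ n - 1 → 2 ≤ m i)
    (hn1 : 1 ≤ m n)
    (hd2 : ∀ i, 2 ≤ i → i ≤ n - 2 → m (i - 1) + m (i + 1) ≤ 2 * m i)
    (hd3 : m (n - 2) + 2 * m n ≤ 2 * m (n - 1))
    (hex : ∃ i, 2 ≤ i ∧ i ≤ n - 1 ∧ m i = 2) :
    (∀ i, 1 ≤ i → i ≤ n - 1 → m i = 2) ∧ m n = 1 := by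
  obtain ⟨i, hi2, hin, hi⟩ := hex
  set g := Function.update m n (2 * m n)
  have hgm : ∀ j, j ≠ n → g j = m j := fun j hj => Function.update_of_ne hj _ _
  have hgn : g n = 2 * m n := Function.update_self ..
  have hlow : ∀ j, 1 ≤ j → j ≤ n → 2 ≤ g j := by
    intro j h1j hjn
    rcases eq_or_ne j n with rfl | hj
    · omega
    · rw [hgm j hj]
      exact hge j h1j (by omega)
  have hconc : ∀ j, 1 < j → j < n → g (j - 1) + g (j + 1) ≤ 2 * g j := by
    intro j h1j hjn
    rw [hgm (j - 1) (by omega), hgm j (by omega)]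
    rcases eq_or_ne (j + 1) n with hlast | hnotLast
    · rw [hlast, hgn, show j - 1 = n - 2 by omega, show j = n - 1 by omega]
      exact hd3
    · rw [hgm (j + 1) hnotLast]
      exact hd2 j h1j (by omega)
  have hconst := eq_lowerBound_of_concave_of_eq_lowerBound hlow hconc (i := i) (by omega)
    (by omega) (by rw [hgm i (by omega), hi])
  refine ⟨fun j h1j hjn => ?_, ?_⟩
  · rw [← hgm j (by omega)]
    exact hconst j h1j (by omega)
  · have := hconst n (by omega) le_rfl
    omega

/-- Type C_n (n ≥ 4) sublemma: if m_i = 2 for some 2 ≤ i ≤ n-1, then m_i = 2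
for all 1 ≤ i ≤ n-1 and m_n = 1. -/
theorem stmt_9 (n : ℕ) (hn : 4 ≤ n) (m : ℕ → ℤ)
    (hge : ∀ i, 1 ≤ i → i ≤ n - 1 → 2 ≤ m i)
    (hn1 : 1 ≤ m n)
    (hd1 : m 2 ≤ 2 * m 1)
    (hd2 : ∀ i, 2 ≤ i → i ≤ n - 2 → m (i - 1) + m (i + 1) ≤ 2 * m i)
    (hd3 : m (n - 2) + 2 * m n ≤ 2 * m (n - 1))
    (hd4 : m (n - 1) ≤ 2 * m n)
    (hex : ∃ i, 2 ≤ i ∧ i ≤ n - 1 ∧ m i = 2) :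
    (∀ i, 1 ≤ i → i ≤ n - 1 → m i = 2) ∧ m n = 1 :=
  stmt_9_general n m hge hn1 hd2 hd3 hex
end

section
/- Let n ≥ 4 and let m_1, …, m_n be integers with m_i ≥ 2 for 1 ≤ i ≤ n−1 and m_n ≥ 1, satisfying the dominance inequalities for type C_n: m_2 ≤ 2m_1, m_{i−1} + m_{i+1} ≤ 2m_i for 2 ≤ i ≤ n−2, m_{n−2} + 2m_n ≤ 2m_{n−1}, and m_{n−1} ≤ 2m_n. Suppose (m_1,…,m_n) ≠ (2,…,2,1) and some coordinate of (m_1,…,m_n) equals the corresponding coordinate of (2,2,…,2,1). Then m_1 = 2, m_i ≥ 3 for all 2 ≤ i ≤ n−1, and m_n ≥ 2. -/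
/-!
The dominance inequalities make `i ↦ m i` concave on `[1, n-1]`, and the last two of them make
its final increment `m (n-1) - m (n-2)` nonnegative, so `m` is nondecreasing there. If some
`m j = 2` with `2 ≤ j ≤ n-1`, then `m 1 = m 2 = 2`: the first increment vanishes, so by concavity
all increments vanish and `m ≡ 2` on `[1, n-1]`; the inequalities at the end then force
`m n = 1`, i.e. `ζ = μ₂`. Hence the only coordinate that can agree with `μ₂` is the first one.
-/

def ConcaveSeqOn (m : ℕ → ℤ) (a b : ℕ) : Prop :=
  ∀ i, a ≤ i → i + 2 ≤ b → m i + m (i + 2) ≤ 2 * m (i + 1)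

namespace ConcaveSeqOn

variable {m : ℕ → ℤ} {a b : ℕ}

theorem sub_antitone (hc : ConcaveSeqOn m a (b + 1)) {i j : ℕ} (hai : a ≤ i) (hij : i ≤ j)
    (hjb : j ≤ b) : m (j + 1) - m j ≤ m (i + 1) - m i := by
  induction j, hij using Nat.le_induction with
  | base => exact le_rfl
  | succ j hij ih =>
    have := hc j (hai.trans hij) (by omega)
    linarith [ih (by omega)]

theorem le_succ (hc : ConcaveSeqOn m a (b + 1)) (hlast : m b ≤ m (b + 1)) {i : ℕ}
    (hai : a ≤ i) (hib : i ≤ b) : m i ≤ m (i + 1) := by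
  linarith [hc.sub_antitone hai hib le_rfl]

theorem monotoneOn (hc : ConcaveSeqOn m a (b + 1)) (hlast : m b ≤ m (b + 1)) :
    MonotoneOn m (Set.Icc a (b + 1)) := by
  rintro i ⟨hai, -⟩ j ⟨-, hjb⟩ hij
  induction j, hij using Nat.le_induction with
  | base => exact le_rfl
  | succ j hij ih => exact (ih (by omega)).trans (hc.le_succ hlast (hai.trans hij) (by omega))

theorem eq_of_succ_eq (hc : ConcaveSeqOn m a (b + 1)) (hlast : m b ≤ m (b + 1))
    (hfirst : m (a + 1) = m a) {i : ℕ} (hai : a ≤ i) (hib : i ≤ b + 1) : m i = m a := by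
  induction i, hai using Nat.le_induction with
  | base => rfl
  | succ i hai ih =>
    have hdec := hc.sub_antitone le_rfl hai (by omega)
    have hinc := hc.le_succ hlast hai (by omega)
    linarith [ih (by omega)]

theorem eq_of_eq_left (hc : ConcaveSeqOn m a (b + 1)) (hlast : m b ≤ m (b + 1)) {j : ℕ}
    (haj : a < j) (hjb : j ≤ b + 1) (hj : m j = m a) {i : ℕ} (hai : a ≤ i) (hib : i ≤ b + 1) :
    m i = m a := by
  have hmono := hc.monotoneOn hlast
  have h1 : m a ≤ m (a + 1) := hmono ⟨le_rfl, by omega⟩ ⟨by omega, by omega⟩ (by omega)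
  have h2 : m (a + 1) ≤ m j := hmono ⟨by omega, by omega⟩ ⟨by omega, hjb⟩ haj
  exact hc.eq_of_succ_eq hlast (by omega) hai hib

end ConcaveSeqOn

theorem stmt_11_general (n : ℕ) (hn : 4 ≤ n) (m : ℕ → ℤ)
    (hge : ∀ i, 1 ≤ i → i ≤ n - 1 → 2 ≤ m i)
    (hd2 : ∀ i, 2 ≤ i → i ≤ n - 2 → m (i - 1) + m (i + 1) ≤ 2 * m i)
    (hd3 : m (n - 2) + 2 * m n ≤ 2 * m (n - 1))
    (hd4 : m (n - 1) ≤ 2 * m n)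
    (hne : ¬ ((∀ i, 1 ≤ i → i ≤ n - 1 → m i = 2) ∧ m n = 1))
    (hnp : (∃ i, 1 ≤ i ∧ i ≤ n - 1 ∧ m i = 2) ∨ m n = 1) :
    m 1 = 2 ∧ (∀ i, 2 ≤ i → i ≤ n - 1 → 3 ≤ m i) ∧ 2 ≤ m n := by
  obtain ⟨b, rfl⟩ : ∃ b, n = b + 2 := ⟨n - 2, by omega⟩
  simp only [Nat.add_sub_cancel, Nat.add_succ_sub_one] at *
  have hc : ConcaveSeqOn m 1 (b + 1) := fun i hi hib => by
    simpa only [Nat.add_sub_cancel] using hd2 (i + 1) (by omega) (by omega)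
  have hlast : m b ≤ m (b + 1) := by linarith
  have hne_two : ∀ j, 2 ≤ j → j ≤ b + 1 → m j ≠ 2 := by
    intro j hj hjb hmj
    have hmono := hc.monotoneOn hlast
    have hm1 : m 1 = 2 :=
      le_antisymm (hmj ▸ hmono ⟨le_rfl, by omega⟩ ⟨by omega, hjb⟩ (by omega))
        (hge 1 le_rfl (by omega))
    have hconst : ∀ i, 1 ≤ i → i ≤ b + 1 → m i = 2 := fun i hi hib =>
      hm1 ▸ hc.eq_of_eq_left hlast (by omega) hjb (hmj.trans hm1.symm) hi hib
    have hb := hconst b (by omega) (by omega)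
    have hb1 := hconst (b + 1) (by omega) le_rfl
    exact hne ⟨hconst, by linarith⟩
  have hgt : ∀ i, 2 ≤ i → i ≤ b + 1 → 3 ≤ m i := fun i hi hib =>
    (hge i (by omega) hib).lt_of_ne (hne_two i hi hib).symm
  have hmn : 2 ≤ m (b + 2) := by linarith [hgt (b + 1) (by omega) le_rfl]
  refine ⟨?_, hgt, hmn⟩
  rcases hnp with ⟨j, hj, hjb, hmj⟩ | h
  · obtain rfl | hj2 : j = 1 ∨ 2 ≤ j := by omega
    · exact hmj
    · exact absurd hmj (hne_two j hj2 hjb)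
  · omega

/-- Type C_n (n ≥ 4): nonprimitive dominant weights above the highest long
root have m_1 = 2, m_i ≥ 3 for 2 ≤ i ≤ n-1 and m_n ≥ 2. -/
theorem stmt_11 (n : ℕ) (hn : 4 ≤ n) (m : ℕ → ℤ)
    (hge : ∀ i, 1 ≤ i → i ≤ n - 1 → 2 ≤ m i)
    (hn1 : 1 ≤ m n)
    (hd1 : m 2 ≤ 2 * m 1)
    (hd2 : ∀ i, 2 ≤ i → i ≤ n - 2 → m (i - 1) + m (i + 1) ≤ 2 * m i)
    (hd3 : m (n - 2) + 2 * m n ≤ 2 * m (n - 1))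
    (hd4 : m (n - 1) ≤ 2 * m n)
    (hne : ¬ ((∀ i, 1 ≤ i → i ≤ n - 1 → m i = 2) ∧ m n = 1))
    (hnp : (∃ i, 1 ≤ i ∧ i ≤ n - 1 ∧ m i = 2) ∨ m n = 1) :
    m 1 = 2 ∧ (∀ i, 2 ≤ i → i ≤ n - 1 → 3 ≤ m i) ∧ 2 ≤ m n :=
  stmt_11_general n hn m hge hd2 hd3 hd4 hne hnp
end

section
/- Let n ≥ 5 and let m_1, …, m_n be integers with m_1 ≥ 1, m_i ≥ 2 for 2 ≤ i ≤ n−2, and m_{n−1} ≥ 1, m_n ≥ 1, satisfying the dominance inequalities for type D_n: m_2 ≤ 2m_1, m_{i−1} + m_{i+1} ≤ 2m_i for 2 ≤ i ≤ n−3, m_{n−3} + m_{n−1} + m_n ≤ 2m_{n−2}, m_{n−2} ≤ 2m_{n−1}, and m_{n−2} ≤ 2m_n. If m_i = 2 for some i with 3 ≤ i ≤ n−2, then m_i = 2 for all i with 2 ≤ i ≤ n−2. -/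
/-!
On the stretch `2 ≤ i ≤ n - 2` the coefficients form a concave sequence bounded below by `2`.
Concavity `m (j - 1) + m (j + 1) ≤ 2 * m j` around a point where `m j = 2` forces both neighbours
down to the bound, so two adjacent values `2` propagate in both directions along the whole stretch.
If the given point is `n - 2`, the end inequality
`m (n - 3) + m (n - 1) + m n ≤ 2 * m (n - 2)` with `m (n - 1), m n ≥ 1` supplies `m (n - 3) = 2`.
-/

section ConcaveSequence

variable {R : Type*} [AddCommMonoid R] [PartialOrder R] [IsOrderedCancelAddMonoid R]

theorem eq_and_eq_of_add_le_two_nsmul {x y c : R} (h : x + y ≤ 2 • c) (hx : c ≤ x) (hy : c ≤ y) :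
    x = c ∧ y = c := by
  rw [two_nsmul] at h
  refine ⟨le_antisymm ?_ hx, le_antisymm ?_ hy⟩
  · exact le_of_add_le_add_right ((add_le_add_right hy x).trans h)
  · exact le_of_add_le_add_left ((add_le_add_left hx y).trans h)

variable {f : ℕ → R} {a b : ℕ} {c : R}
  (hconc : ∀ i, a ≤ i → i + 2 ≤ b → f i + f (i + 2) ≤ 2 • f (i + 1))
  (hge : ∀ i, a ≤ i → i ≤ b → c ≤ f i)
include hconc hge

theorem eq_on_Icc_of_concave_of_adjacent_eq {k : ℕ} (hak : a ≤ k) (hkb : k + 1 ≤ b)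
    (hk : f k = c) (hk1 : f (k + 1) = c) : ∀ i, a ≤ i → i ≤ b → f i = c := by
  have right : ∀ j, k ≤ j → j + 1 ≤ b → f j = c ∧ f (j + 1) = c := by
    intro j hkj
    induction j, hkj using Nat.le_induction with
    | base => exact fun _ ↦ ⟨hk, hk1⟩
    | succ j hkj ih =>
      intro hjb
      obtain ⟨hj, hj1⟩ := ih (by omega)
      have h := hconc j (by omega) (by omega)
      rw [hj, hj1] at h
      exact ⟨hj1, (eq_and_eq_of_add_le_two_nsmul h le_rfl (hge _ (by omega) hjb)).2⟩
  have left : ∀ j, a ≤ j → j ≤ k → f j = c ∧ f (j + 1) = c := by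
    intro j haj hjk
    refine Nat.decreasingInduction' (fun l _ hjl ih ↦ ?_) hjk ⟨hk, hk1⟩
    have h := hconc l (by omega) (by omega)
    rw [ih.1, ih.2] at h
    exact ⟨(eq_and_eq_of_add_le_two_nsmul h (hge l (by omega) (by omega)) le_rfl).1, ih.1⟩
  intro i hai hib
  rcases le_or_gt i k with hik | hki
  · exact (left i hai hik).1
  · obtain ⟨j, rfl⟩ : ∃ j, i = j + 1 := ⟨i - 1, by omega⟩
    exact (right j (by omega) hib).2

theorem eq_on_Icc_of_concave_of_eq {k : ℕ} (hak : a ≤ k) (hkb : k + 2 ≤ b) (hk : f (k + 1) = c) :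
    ∀ i, a ≤ i → i ≤ b → f i = c := by
  have h := hconc k hak hkb
  rw [hk] at h
  obtain ⟨hk0, -⟩ := eq_and_eq_of_add_le_two_nsmul h (hge k hak (by omega)) (hge _ (by omega) hkb)
  exact eq_on_Icc_of_concave_of_adjacent_eq hconc hge hak (by omega) hk0 hk

end ConcaveSequence

theorem stmt_12_general (n : ℕ) (m : ℕ → ℤ)
    (hge : ∀ i, 2 ≤ i → i ≤ n - 2 → 2 ≤ m i)
    (hn1 : 1 ≤ m (n - 1)) (hn2 : 1 ≤ m n)
    (hd2 : ∀ i, 2 ≤ i → i ≤ n - 3 → m (i - 1) + m (i + 1) ≤ 2 * m i)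
    (hd3 : m (n - 3) + m (n - 1) + m n ≤ 2 * m (n - 2))
    (hex : ∃ i, 3 ≤ i ∧ i ≤ n - 2 ∧ m i = 2) :
    ∀ i, 2 ≤ i → i ≤ n - 2 → m i = 2 := by
  have hconc : ∀ j, 2 ≤ j → j + 2 ≤ n - 2 → m j + m (j + 2) ≤ 2 • m (j + 1) := by
    intro j hj hjn
    simpa [two_nsmul, two_mul] using hd2 (j + 1) (by omega) (by omega)
  obtain ⟨i, hi3, hin, hi⟩ := hex
  rcases lt_or_eq_of_le hin with hin | rfl
  · obtain ⟨k, rfl⟩ : ∃ k, i = k + 1 := ⟨i - 1, by omega⟩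
    exact eq_on_Icc_of_concave_of_eq hconc hge (by omega) (by omega) hi
  · have hn3 : m (n - 3) = 2 := le_antisymm (by omega) (hge _ (by omega) (by omega))
    have hsucc : n - 3 + 1 = n - 2 := by omega
    exact eq_on_Icc_of_concave_of_adjacent_eq hconc hge (by omega) (by omega) hn3 (hsucc ▸ hi)

/-- Type D_n (n ≥ 5) sublemma: if m_i = 2 for some 3 ≤ i ≤ n-2, then m_i = 2
for all 2 ≤ i ≤ n-2. -/
theorem stmt_12 (n : ℕ) (hn : 5 ≤ n) (m : ℕ → ℤ)
    (h1 : 1 ≤ m 1)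
    (hge : ∀ i, 2 ≤ i → i ≤ n - 2 → 2 ≤ m i)
    (hn1 : 1 ≤ m (n - 1)) (hn2 : 1 ≤ m n)
    (hd1 : m 2 ≤ 2 * m 1)
    (hd2 : ∀ i, 2 ≤ i → i ≤ n - 3 → m (i - 1) + m (i + 1) ≤ 2 * m i)
    (hd3 : m (n - 3) + m (n - 1) + m n ≤ 2 * m (n - 2))
    (hd4 : m (n - 2) ≤ 2 * m (n - 1))
    (hd5 : m (n - 2) ≤ 2 * m n)
    (hex : ∃ i, 3 ≤ i ∧ i ≤ n - 2 ∧ m i = 2) :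
    ∀ i, 2 ≤ i → i ≤ n - 2 → m i = 2 :=
  stmt_12_general n m hge hn1 hn2 hd2 hd3 hex
end

section
/- Let n ≥ 5 and let m_1, …, m_n be integers with m_1 ≥ 1, m_i ≥ 2 for 2 ≤ i ≤ n−2, m_{n−1} ≥ 1, m_n ≥ 1, satisfying the dominance inequalities for type D_n: m_2 ≤ 2m_1, m_{i−1} + m_{i+1} ≤ 2m_i for 2 ≤ i ≤ n−3, m_{n−3} + m_{n−1} + m_n ≤ 2m_{n−2}, m_{n−2} ≤ 2m_{n−1}, and m_{n−2} ≤ 2m_n. Suppose (m_1,…,m_n) ≠ (1,2,…,2,1,1) and some coordinate equals the corresponding coordinate of (1,2,…,2,1,1). Then either (m_1,…,m_n) = (2,2,…,2,1,1), or m_1 = 1, m_2 = 2, m_3 = 3, m_i ≥ 3 for 4 ≤ i ≤ n−2, and m_{n−1} ≥ 2, m_n ≥ 2. -/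
/-!
Dominance makes the coefficients concave along the chain `α₁, …, α_{n-2}`, and combining the
three inequalities at the branch node shows that the last increment `m_{n-2} - m_{n-3}` is
nonnegative, so the chain is nondecreasing. Once two consecutive coefficients agree, concavity
keeps the chain constant from there on, and a constant value `c` at the branch node forces
`m_{n-1} = m_n = c / 2`. Nonprimitivity then bounds `m_2 ≤ 2`, which leaves only the two
listed weights.
-/

def DiscreteConcaveOn {β : Type*} [AddCommGroup β] [PartialOrder β] (f : ℕ → β) (a b : ℕ) :
    Prop :=
  ∀ i, a ≤ i → i + 2 ≤ b → f (i + 2) - f (i + 1) ≤ f (i + 1) - f i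

namespace DiscreteConcaveOn

variable {β : Type*} [AddCommGroup β] [PartialOrder β] {f : ℕ → β} {a b : ℕ}

theorem sub_le_sub (hf : DiscreteConcaveOn f a b) {i j : ℕ} (hai : a ≤ i) (hij : i ≤ j)
    (hjb : j + 1 ≤ b) : f (j + 1) - f j ≤ f (i + 1) - f i := by
  induction j, hij using Nat.le_induction with
  | base => exact le_rfl
  | succ j hij ih => exact (hf j (hai.trans hij) hjb).trans (ih (by omega))

variable [IsOrderedAddMonoid β]

theorem monotoneOn (hf : DiscreteConcaveOn f a (b + 1)) (hb : f b ≤ f (b + 1)) :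
    MonotoneOn f (Set.Icc a (b + 1)) := by
  refine monotoneOn_of_le_succ Set.ordConnected_Icc fun i _ hi hi' => ?_
  rw [Order.succ_eq_add_one] at hi' ⊢
  have hinc := hf.sub_le_sub hi.1 (Nat.le_of_add_le_add_right hi'.2) le_rfl
  exact sub_nonneg.mp ((sub_nonneg.mpr hb).trans hinc)

theorem eqOn_of_monotoneOn (hf : DiscreteConcaveOn f a b) (hmono : MonotoneOn f (Set.Icc a b))
    {t : ℕ} (hat : a ≤ t) (htb : t + 1 ≤ b) (hflat : f (t + 1) ≤ f t) :
    ∀ j ∈ Set.Icc t b, f j = f t := by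
  have hanti : AntitoneOn f (Set.Icc t b) := by
    refine antitoneOn_of_succ_le Set.ordConnected_Icc fun i _ hi hi' => ?_
    rw [Order.succ_eq_add_one] at hi' ⊢
    have hinc := hf.sub_le_sub hat hi.1 hi'.2
    exact sub_nonpos.mp (hinc.trans (sub_nonpos.mpr hflat))
  intro j hj
  have htj : t ∈ Set.Icc t b := ⟨le_rfl, by omega⟩
  exact le_antisymm (hanti htj hj hj.1)
    (hmono ⟨hat, htj.2⟩ ⟨hat.trans hj.1, hj.2⟩ hj.1)

end DiscreteConcaveOn

/-- `m i` is the coefficient of `α_i`; the fields say `⟨ζ, α_i^∨⟩ ≥ 0` for `i = 1`,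
`2 ≤ i ≤ n - 3`, `n - 2`, `n - 1` and `n`. -/
structure IsDominantD (n : ℕ) (m : ℕ → ℤ) : Prop where
  pairing_one : m 2 ≤ 2 * m 1
  pairing_chain : ∀ i, 2 ≤ i → i ≤ n - 3 → m (i - 1) + m (i + 1) ≤ 2 * m i
  pairing_branch : m (n - 3) + m (n - 1) + m n ≤ 2 * m (n - 2)
  pairing_pred : m (n - 2) ≤ 2 * m (n - 1)
  pairing_last : m (n - 2) ≤ 2 * m n

namespace IsDominantD

variable {n : ℕ} {m : ℕ → ℤ}

theorem discreteConcaveOn (hD : IsDominantD n m) : DiscreteConcaveOn m 1 (n - 2) :=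
  fun i _ hin => by
    have := hD.pairing_chain (i + 1) (by omega) (by omega)
    simp only [Nat.add_sub_cancel] at this
    linarith

theorem monotoneOn (hD : IsDominantD n m) (hn : 5 ≤ n) : MonotoneOn m (Set.Icc 1 (n - 2)) := by
  have hconc := hD.discreteConcaveOn
  have hn3 : n - 2 = n - 3 + 1 := by omega
  rw [hn3] at hconc ⊢
  refine hconc.monotoneOn ?_
  rw [← hn3]
  linarith [hD.pairing_branch, hD.pairing_pred, hD.pairing_last]

theorem le_of_le (hD : IsDominantD n m) (hn : 5 ≤ n) {i j : ℕ} (hi : 1 ≤ i) (hij : i ≤ j)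
    (hj : j ≤ n - 2) : m i ≤ m j :=
  hD.monotoneOn hn ⟨hi, hij.trans hj⟩ ⟨hi.trans hij, hj⟩ hij

theorem eqOn_of_eq_succ (hD : IsDominantD n m) (hn : 5 ≤ n) {t : ℕ} (ht : 1 ≤ t)
    (htn : t + 1 ≤ n - 2) (hflat : m (t + 1) = m t) :
    (∀ j ∈ Set.Icc t (n - 2), m j = m t) ∧ 2 * m (n - 1) = m t ∧ 2 * m n = m t := by
  have hconst := hD.discreteConcaveOn.eqOn_of_monotoneOn (hD.monotoneOn hn) ht htn hflat.le
  have h3 := hconst (n - 3) ⟨by omega, by omega⟩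
  have h2 := hconst (n - 2) ⟨by omega, le_rfl⟩
  obtain ⟨-, -, hbranch, hpred, hlast⟩ := hD
  exact ⟨hconst, by linarith, by linarith⟩

theorem le_two_of_nonprimitive (hD : IsDominantD n m) (hn : 5 ≤ n)
    (hnp : m 1 = 1 ∨ (∃ i, 2 ≤ i ∧ i ≤ n - 2 ∧ m i = 2) ∨ m (n - 1) = 1 ∨ m n = 1) :
    m 2 ≤ 2 := by
  by_contra! hm2
  have hn2 := hD.le_of_le hn (i := 2) (j := n - 2) (by omega) (by omega) le_rfl
  rcases hnp with h | ⟨i, hi2, hin, hi⟩ | h | h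
  · linarith [hD.pairing_one]
  · linarith [hD.le_of_le hn (by omega) hi2 hin]
  · linarith [hD.pairing_pred]
  · linarith [hD.pairing_last]

end IsDominantD

theorem stmt_14_general (n : ℕ) (hn : 5 ≤ n) (m : ℕ → ℤ)
    (hd1 : m 2 ≤ 2 * m 1)
    (hd2 : ∀ i, 2 ≤ i → i ≤ n - 3 → m (i - 1) + m (i + 1) ≤ 2 * m i)
    (hd3 : m (n - 3) + m (n - 1) + m n ≤ 2 * m (n - 2))
    (hd4 : m (n - 2) ≤ 2 * m (n - 1))
    (hd5 : m (n - 2) ≤ 2 * m n)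
    (hne : ¬ (m 1 = 1 ∧ (∀ i, 2 ≤ i → i ≤ n - 2 → m i = 2) ∧
      m (n - 1) = 1 ∧ m n = 1))
    (hnp : m 1 = 1 ∨ (∃ i, 2 ≤ i ∧ i ≤ n - 2 ∧ m i = 2) ∨
      m (n - 1) = 1 ∨ m n = 1) :
    (m 1 = 2 ∧ (∀ i, 2 ≤ i → i ≤ n - 2 → m i = 2) ∧
      m (n - 1) = 1 ∧ m n = 1) ∨
    (m 1 = 1 ∧ m 2 = 2 ∧ m 3 = 3 ∧ (∀ i, 4 ≤ i → i ≤ n - 2 → 3 ≤ m i) ∧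
      2 ≤ m (n - 1) ∧ 2 ≤ m n) := by
  have hD : IsDominantD n m := ⟨hd1, hd2, hd3, hd4, hd5⟩
  rcases (hD.le_of_le hn le_rfl one_le_two (by omega)).eq_or_lt with h12 | h12
  · obtain ⟨hconst, hpred, hlast⟩ := hD.eqOn_of_eq_succ hn le_rfl (by omega) h12.symm
    have hm1 : m 1 = 2 := by
      rcases hnp with h | ⟨i, hi2, hin, hi⟩ | h | h
      · omega
      · have := hconst i ⟨by omega, hin⟩
        omega
      · omega
      · omega
    exact Or.inl ⟨hm1, fun i hi2 hin => (hconst i ⟨by omega, hin⟩).trans hm1, by omega, by omega⟩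
  · have hm2 := hD.le_two_of_nonprimitive hn hnp
    have hconc : m 3 - m 2 ≤ m 2 - m 1 := hD.discreteConcaveOn 1 le_rfl (by omega)
    have h23 := hD.le_of_le hn (i := 2) (j := 3) (by omega) (by omega) (by omega)
    rcases (show m 3 = 2 ∨ m 3 = 3 by omega) with h3 | h3
    · obtain ⟨hconst, hpred, hlast⟩ :=
        hD.eqOn_of_eq_succ hn (t := 2) (by omega) (by omega) (show m 3 = m 2 by omega)
      exact absurd ⟨by omega, fun i hi2 hin => (hconst i ⟨hi2, hin⟩).trans (by omega),
        by omega, by omega⟩ hne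
    · have h3le {i : ℕ} (hi3 : 3 ≤ i) (hin : i ≤ n - 2) : 3 ≤ m i :=
        h3 ▸ hD.le_of_le hn (by omega) hi3 hin
      have := h3le (i := n - 2) (by omega) le_rfl
      exact Or.inr ⟨by omega, by omega, h3, fun i hi4 hin => h3le (by omega) hin,
        by omega, by omega⟩

/-- Type D_n (n ≥ 5): classification of nonprimitive dominant weights above
the highest root. -/
theorem stmt_14 (n : ℕ) (hn : 5 ≤ n) (m : ℕ → ℤ)
    (h1 : 1 ≤ m 1)
    (hge : ∀ i, 2 ≤ i → i ≤ n - 2 → 2 ≤ m i)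
    (hn1 : 1 ≤ m (n - 1)) (hn2 : 1 ≤ m n)
    (hd1 : m 2 ≤ 2 * m 1)
    (hd2 : ∀ i, 2 ≤ i → i ≤ n - 3 → m (i - 1) + m (i + 1) ≤ 2 * m i)
    (hd3 : m (n - 3) + m (n - 1) + m n ≤ 2 * m (n - 2))
    (hd4 : m (n - 2) ≤ 2 * m (n - 1))
    (hd5 : m (n - 2) ≤ 2 * m n)
    (hne : ¬ (m 1 = 1 ∧ (∀ i, 2 ≤ i → i ≤ n - 2 → m i = 2) ∧
      m (n - 1) = 1 ∧ m n = 1))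
    (hnp : m 1 = 1 ∨ (∃ i, 2 ≤ i ∧ i ≤ n - 2 ∧ m i = 2) ∨
      m (n - 1) = 1 ∨ m n = 1) :
    (m 1 = 2 ∧ (∀ i, 2 ≤ i → i ≤ n - 2 → m i = 2) ∧
      m (n - 1) = 1 ∧ m n = 1) ∨
    (m 1 = 1 ∧ m 2 = 2 ∧ m 3 = 3 ∧ (∀ i, 4 ≤ i → i ≤ n - 2 → 3 ≤ m i) ∧
      2 ≤ m (n - 1) ∧ 2 ≤ m n) :=
  stmt_14_general n hn m hd1 hd2 hd3 hd4 hd5 hne hnp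
end

section
/- Let m_1, …, m_7 be integers with m_1 ≥ 2, m_2 ≥ 2, m_3 ≥ 3, m_4 ≥ 4, m_5 ≥ 3, m_6 ≥ 2, m_7 ≥ 1, satisfying the dominance inequalities for type E_7: m_3 ≤ 2m_1, m_4 ≤ 2m_2, m_1 + m_4 ≤ 2m_3, m_2 + m_3 + m_5 ≤ 2m_4, m_4 + m_6 ≤ 2m_5, m_5 + m_7 ≤ 2m_6, and m_6 ≤ 2m_7. If (m_1,…,m_7) ≠ (2, 2, 3, 4, 3, 2, 1) and some coordinate of (m_1,…,m_7) equals the corresponding coordinate of (2, 2, 3, 4, 3, 2, 1), then (m_1,…,m_7) = (2, 3, 4, 6, 5, 4, 2) or (m_1,…,m_7) = (2, 3, 4, 6, 5, 4, 3). -/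
/-!
Write `ζ = μ + ν` with `μ = (2,2,3,4,3,2,1)`. The highest root of `E₇` is the fundamental weight
`ω₁`, so dominance of `ζ` says `⟨ν, α_i^∨⟩ ≤ 0` for `i = 2, …, 7`, while `ν₁ ≥ 0`. Nodes `2, …, 7`
span a `D₆` subdiagram whose inverse Cartan matrix has positive entries, so `ν` restricted to them is
a positive combination of `ν₁` and the defects `-⟨ν, α_i^∨⟩`: either `ν = 0` or every `ν_i`,
`i ≥ 2`, is positive. A nonprimitive `ζ ≠ μ` thus has `m₁ = 2`, and the dominance inequalities,
read outwards from node 1, leave only the two listed weights.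
-/

namespace E7

theorem eq_highestRoot_or_coords_gt {m1 m2 m3 m4 m5 m6 m7 : ℤ} (h1 : 2 ≤ m1)
    (hd2 : m4 ≤ 2 * m2) (hd3 : m1 + m4 ≤ 2 * m3)
    (hd4 : m2 + m3 + m5 ≤ 2 * m4) (hd5 : m4 + m6 ≤ 2 * m5)
    (hd6 : m5 + m7 ≤ 2 * m6) (hd7 : m6 ≤ 2 * m7) :
    (m1, m2, m3, m4, m5, m6, m7) = (2, 2, 3, 4, 3, 2, 1) ∨
    (3 ≤ m2 ∧ 4 ≤ m3 ∧ 5 ≤ m4 ∧ 4 ≤ m5 ∧ 3 ≤ m6 ∧ 2 ≤ m7) := by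
  simp only [Prod.mk.injEq]
  omega

theorem eq_or_eq_of_m1_eq_two {m1 m2 m3 m4 m5 m6 m7 : ℤ}
    (hm1 : m1 = 2) (h2 : 3 ≤ m2) (h7 : 2 ≤ m7)
    (hd1 : m3 ≤ 2 * m1) (hd3 : m1 + m4 ≤ 2 * m3)
    (hd4 : m2 + m3 + m5 ≤ 2 * m4) (hd5 : m4 + m6 ≤ 2 * m5)
    (hd6 : m5 + m7 ≤ 2 * m6) :
    (m1, m2, m3, m4, m5, m6, m7) = (2, 3, 4, 6, 5, 4, 2) ∨
    (m1, m2, m3, m4, m5, m6, m7) = (2, 3, 4, 6, 5, 4, 3) := by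
  have hm34 : m3 = 4 ∧ m4 = 6 := by omega
  have hm25 : m2 = 3 ∧ m5 = 5 := by omega
  have hm6 : m6 = 4 := by omega
  simp only [Prod.mk.injEq]
  omega

end E7

theorem stmt_16_general (m1 m2 m3 m4 m5 m6 m7 : ℤ)
    (h1 : 2 ≤ m1)
    (hd1 : m3 ≤ 2 * m1) (hd2 : m4 ≤ 2 * m2) (hd3 : m1 + m4 ≤ 2 * m3)
    (hd4 : m2 + m3 + m5 ≤ 2 * m4) (hd5 : m4 + m6 ≤ 2 * m5)
    (hd6 : m5 + m7 ≤ 2 * m6) (hd7 : m6 ≤ 2 * m7)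
    (hne : (m1, m2, m3, m4, m5, m6, m7) ≠ (2, 2, 3, 4, 3, 2, 1))
    (hnp : m1 = 2 ∨ m2 = 2 ∨ m3 = 3 ∨ m4 = 4 ∨ m5 = 3 ∨ m6 = 2 ∨ m7 = 1) :
    (m1, m2, m3, m4, m5, m6, m7) = (2, 3, 4, 6, 5, 4, 2) ∨
    (m1, m2, m3, m4, m5, m6, m7) = (2, 3, 4, 6, 5, 4, 3) := by
  rcases E7.eq_highestRoot_or_coords_gt h1 hd2 hd3 hd4 hd5 hd6 hd7 with hμ | ⟨h2, h3, h4, h5, h6, h7⟩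
  · exact absurd hμ hne
  · have hm1 : m1 = 2 := by omega
    exact E7.eq_or_eq_of_m1_eq_two hm1 h2 h7 hd1 hd3 hd4 hd5 hd6

/-- Type E_7: the only nonprimitive dominant weights strictly above the highest
root are (2,3,4,6,5,4,2) and (2,3,4,6,5,4,3). -/
theorem stmt_16 (m1 m2 m3 m4 m5 m6 m7 : ℤ)
    (h1 : 2 ≤ m1) (h2 : 2 ≤ m2) (h3 : 3 ≤ m3) (h4 : 4 ≤ m4)
    (h5 : 3 ≤ m5) (h6 : 2 ≤ m6) (h7 : 1 ≤ m7)
    (hd1 : m3 ≤ 2 * m1) (hd2 : m4 ≤ 2 * m2) (hd3 : m1 + m4 ≤ 2 * m3)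
    (hd4 : m2 + m3 + m5 ≤ 2 * m4) (hd5 : m4 + m6 ≤ 2 * m5)
    (hd6 : m5 + m7 ≤ 2 * m6) (hd7 : m6 ≤ 2 * m7)
    (hne : (m1, m2, m3, m4, m5, m6, m7) ≠ (2, 2, 3, 4, 3, 2, 1))
    (hnp : m1 = 2 ∨ m2 = 2 ∨ m3 = 3 ∨ m4 = 4 ∨ m5 = 3 ∨ m6 = 2 ∨ m7 = 1) :
    (m1, m2, m3, m4, m5, m6, m7) = (2, 3, 4, 6, 5, 4, 2) ∨
    (m1, m2, m3, m4, m5, m6, m7) = (2, 3, 4, 6, 5, 4, 3) :=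
  stmt_16_general m1 m2 m3 m4 m5 m6 m7 h1 hd1 hd2 hd3 hd4 hd5 hd6 hd7 hne hnp
end
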